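/- Let p, k₂, q₂ be positive integers with gcd(k₂, p) = 1 and 2k₂ < p, and define f(n) = 1 if [n]_p ∈ {-k₂+1,...,0}, f(n) = -1 if [n]_p ∈ {1,...,k₂}, 0 otherwise. If there exist integers i₀, j₀ with f(q₂ i₀ + k₂ j₀) = -1, f(q₂ i₀ + k₂(j₀+1)) = 1, and f(q₂ i₀ + k₂(j₀+2)) = -1, then for every integer i there are no two adjacent zeros in the sequence s ↦ f(q₂ i + k₂ s), i.e., there is no integer s with f(q₂ i + k₂ s) = 0 and f(q₂ i + k₂ (s+1)) = 0. -/

import Mathlib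

/-!
Adding `k₂` moves `[n]_p` either to `[n]_p + k₂` or, wrapping around, to `[n]_p + k₂ - p`.
The step from a value `-1` (`[n]_p ∈ [1, k₂]`) to a value `1` (`[n]_p ∈ [1 - k₂, 0]`) must wrap,
which forces `p < 3k₂`. Then each half of the zero set `(-p/2, -k₂] ∪ (k₂, p/2]` is shorter
than `k₂/2`, so a step of `k₂` from a zero can neither stay in it nor wrap into it.
-/

/-- `redp p n` is `[n]_p`, the representative of `n` mod `p` in `(-p/2, p/2]`. -/
def redp (p n : ℤ) : ℤ := (n + (p - 1) / 2) % p - (p - 1) / 2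

/-- The sign function `f` of formula (1). -/
def dAsign (p k₂ n : ℤ) : ℤ :=
  if -k₂ + 1 ≤ redp p n ∧ redp p n ≤ 0 then 1
  else if 1 ≤ redp p n ∧ redp p n ≤ k₂ then -1
  else 0

section

variable {p k : ℤ}

theorem neg_lt_two_mul_redp (hp : 0 < p) (n : ℤ) : -p < 2 * redp p n := by
  have := Int.emod_nonneg (n + (p - 1) / 2) hp.ne'
  unfold redp
  omega

theorem two_mul_redp_le (hp : 0 < p) (n : ℤ) : 2 * redp p n ≤ p := by
  have := Int.emod_lt_of_pos (n + (p - 1) / 2) hp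
  unfold redp
  omega

theorem redp_add_of_lt (hp : 0 < p) (hk : 0 ≤ k) (hkp : k < p) (n : ℤ) :
    redp p (n + k) = redp p n + k ∨ redp p (n + k) = redp p n + k - p := by
  set r := (n + (p - 1) / 2) % p
  have hr₀ : 0 ≤ r := Int.emod_nonneg _ hp.ne'
  have hr₁ : r < p := Int.emod_lt_of_pos _ hp
  have hmod : (n + k + (p - 1) / 2) % p = (r + k) % p := by
    rw [Int.emod_add_emod, add_right_comm]
  unfold redp
  rw [hmod]
  rcases lt_or_ge (r + k) p with h | h
  · left
    rw [Int.emod_eq_of_lt (by omega) h]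
    ring
  · right
    rw [Int.emod_eq_sub_self_emod, Int.emod_eq_of_lt (by omega) (by omega)]
    ring

theorem dAsign_eq_one_iff (n : ℤ) : dAsign p k n = 1 ↔ -k + 1 ≤ redp p n ∧ redp p n ≤ 0 := by
  unfold dAsign
  grind

theorem dAsign_eq_neg_one_iff (n : ℤ) :
    dAsign p k n = -1 ↔ 1 ≤ redp p n ∧ redp p n ≤ k := by
  unfold dAsign
  grind

theorem dAsign_eq_zero_iff (n : ℤ) : dAsign p k n = 0 ↔ redp p n < -k + 1 ∨ k < redp p n := by
  unfold dAsign
  grind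

theorem lt_three_mul_of_dAsign_eq_neg_one_of_dAsign_add_eq_one (hp : 0 < p) (hkp : k < p)
    {n : ℤ} (hn : dAsign p k n = -1) (hnk : dAsign p k (n + k) = 1) : p < 3 * k := by
  rw [dAsign_eq_neg_one_iff] at hn
  rw [dAsign_eq_one_iff] at hnk
  rcases redp_add_of_lt hp (by omega) hkp n with h | h <;> omega

theorem not_dAsign_eq_zero_and_dAsign_add_eq_zero (hp : 0 < p) (hkp : k < p) (hp3 : p < 3 * k)
    (n : ℤ) : ¬ (dAsign p k n = 0 ∧ dAsign p k (n + k) = 0) := by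
  rintro ⟨hn, hnk⟩
  rw [dAsign_eq_zero_iff] at hn hnk
  have := neg_lt_two_mul_redp hp n
  have := two_mul_redp_le hp n
  have := neg_lt_two_mul_redp hp (n + k)
  have := two_mul_redp_le hp (n + k)
  rcases redp_add_of_lt hp (by omega) hkp n with h | h <;> omega

end

theorem lemma_le_general (p k₂ q₂ : ℤ) (hp : 0 < p) (hk2 : 2 * k₂ < p)
    (i₀ j₀ : ℤ)
    (h0 : dAsign p k₂ (q₂ * i₀ + k₂ * j₀) = -1)
    (h1 : dAsign p k₂ (q₂ * i₀ + k₂ * (j₀ + 1)) = 1) :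
    ∀ i s : ℤ, ¬ (dAsign p k₂ (q₂ * i + k₂ * s) = 0 ∧
      dAsign p k₂ (q₂ * i + k₂ * (s + 1)) = 0) := by
  have hkp : k₂ < p := by omega
  have step (n s : ℤ) : n + k₂ * (s + 1) = n + k₂ * s + k₂ := by ring
  rw [step] at h1
  have hp3 := lt_three_mul_of_dAsign_eq_neg_one_of_dAsign_add_eq_one hp hkp h0 h1
  intro i s
  rw [step]
  exact not_dAsign_eq_zero_and_dAsign_add_eq_zero hp hkp hp3 _

/-- Lemma 2.3: if the pattern `-1, 1, -1` occurs in some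
step-`k₂` sequence, then no step-`k₂` sequence has two adjacent zeros. -/
theorem lemma_le (p k₂ q₂ : ℤ) (hp : 0 < p) (hk : 0 < k₂) (hq : 0 < q₂)
    (hcop : IsCoprime k₂ p) (hk2 : 2 * k₂ < p)
    (i₀ j₀ : ℤ)
    (h0 : dAsign p k₂ (q₂ * i₀ + k₂ * j₀) = -1)
    (h1 : dAsign p k₂ (q₂ * i₀ + k₂ * (j₀ + 1)) = 1)
    (h2 : dAsign p k₂ (q₂ * i₀ + k₂ * (j₀ + 2)) = -1) :
    ∀ i s : ℤ, ¬ (dAsign p k₂ (q₂ * i + k₂ * s) = 0 ∧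
      dAsign p k₂ (q₂ * i + k₂ * (s + 1)) = 0) :=
  lemma_le_general p k₂ q₂ hp hk2 i₀ j₀ h0 h1
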